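/- Let I ⊆ ℝ be an open interval containing 0 and let u, v : I → ℝ be differentiable functions with u(0) = v(0) = 1 such that for all t ∈ I one has 0 < u(t) < 2^{1/3}, v(t) > 0, and u'(t) = (2/3)·(2 − u(t)³)/(u(t)³ v(t)³), v'(t) = −(2/3)·(1 − 2u(t)³)/(u(t)⁴ v(t)²). Then u satisfies the scalar ordinary differential equation u'(t) = (2/3)·(2 − u(t)³)^{5/2}·u(t)^{−3/2} for all t ∈ I. -/
import Mathlib


/-- For the planar system u' = (2/3)(2−u³)/(u³v³),
v' = −(2/3)(1−2u³)/(u⁴v²) on an open interval `I` containing `0`, with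
u(0) = v(0) = 1 and 0 < u < 2^{1/3}, v > 0 on `I`, the function `u` satisfies
the scalar ODE u' = (2/3)·(2−u³)^{5/2}·u^{−3/2}. -/
lemma key_alg (a b w : ℝ) (ha : 0 < a) (hb : 0 < b) (hw : 0 < w)
    (hE : a * w ^ 2 * b = 1) :
    (2 / 3) * b / (a ^ 3 * w ^ 3) = (2 / 3) * b ^ ((5 : ℝ) / 2) * a ^ (-(3 : ℝ) / 2) := by
  have hc : (0:ℝ) < a * b := mul_pos ha hb
  have hw2 : w ^ 2 = (a * b)⁻¹ := by
    field_simp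
    linear_combination hE
  have hw' : w = (a * b) ^ (-(1:ℝ)/2) := by
    have h1 : ((w : ℝ) ^ (2:ℕ)) ^ ((1:ℝ)/2) = w := by
      rw [← Real.rpow_natCast w 2, ← Real.rpow_mul hw.le]
      norm_num
    rw [← h1, hw2, Real.inv_rpow hc.le, ← Real.rpow_neg hc.le]
    norm_num
  have hw3 : w ^ 3 = a ^ (-(3:ℝ)/2) * b ^ (-(3:ℝ)/2) := by
    rw [hw', ← Real.rpow_natCast _ 3, ← Real.rpow_mul hc.le, Real.mul_rpow ha.le hb.le]
    norm_num
  have e1 : (a:ℝ) ^ (3:ℕ) * (a ^ (-(3:ℝ)/2) * b ^ (-(3:ℝ)/2)) = a ^ ((3:ℝ)/2) * b ^ (-(3:ℝ)/2) := by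
    rw [← Real.rpow_natCast a 3, ← mul_assoc, ← Real.rpow_add ha]
    norm_num
  rw [hw3, e1]
  have h32a : (0:ℝ) < a ^ ((3:ℝ)/2) := Real.rpow_pos_of_pos ha _
  have h32b : (0:ℝ) < b ^ (-(3:ℝ)/2) := Real.rpow_pos_of_pos hb _
  rw [div_eq_iff (by positivity)]
  rw [show (2/3 : ℝ) * b ^ ((5:ℝ)/2) * a ^ (-(3:ℝ)/2) * (a ^ ((3:ℝ)/2) * b ^ (-(3:ℝ)/2))
      = (2/3 : ℝ) * (b ^ ((5:ℝ)/2) * b ^ (-(3:ℝ)/2)) * (a ^ (-(3:ℝ)/2) * a ^ ((3:ℝ)/2)) from by ring,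
    ← Real.rpow_add hb, ← Real.rpow_add ha]
  norm_num

theorem scalar_ODE_for_u
    (I : Set ℝ) (hIopen : IsOpen I) (hIconn : I.OrdConnected) (h0I : (0 : ℝ) ∈ I)
    (u v : ℝ → ℝ)
    (hu0 : u 0 = 1) (hv0 : v 0 = 1)
    (hu_pos : ∀ t ∈ I, 0 < u t)
    (hu_lt : ∀ t ∈ I, u t < (2 : ℝ) ^ ((1 : ℝ) / 3))
    (hv_pos : ∀ t ∈ I, 0 < v t)
    (hu' : ∀ t ∈ I, HasDerivAt u ((2 / 3) * (2 - u t ^ 3) / (u t ^ 3 * v t ^ 3)) t)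
    (hv' : ∀ t ∈ I, HasDerivAt v (-(2 / 3) * (1 - 2 * u t ^ 3) / (u t ^ 4 * v t ^ 2)) t) :
    ∀ t ∈ I, HasDerivAt u ((2 / 3) * (2 - u t ^ 3) ^ ((5 : ℝ) / 2) * u t ^ (-(3 : ℝ) / 2)) t := by
  -- positivity of 2 - u³
  have hb : ∀ t ∈ I, 0 < 2 - u t ^ 3 := by
    intro t ht
    have h1 : u t ^ 3 < ((2 : ℝ) ^ ((1 : ℝ) / 3)) ^ (3:ℕ) :=
      pow_lt_pow_left₀ (hu_lt t ht) (hu_pos t ht).le (by norm_num)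
    have h2 : ((2 : ℝ) ^ ((1 : ℝ) / 3)) ^ (3:ℕ) = 2 := by
      rw [← Real.rpow_natCast _ 3, ← Real.rpow_mul (by norm_num)]
      norm_num
    linarith [h2 ▸ h1]
  -- conserved quantity
  set E : ℝ → ℝ := fun t => u t * v t ^ 2 * (2 - u t ^ 3) with hE
  have hE' : ∀ t ∈ I, HasDerivAt E 0 t := by
    intro t ht
    have ha := hu_pos t ht
    have hw := hv_pos t ht
    have hd : HasDerivAt E
        (((2 / 3) * (2 - u t ^ 3) / (u t ^ 3 * v t ^ 3) * v t ^ 2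
          + u t * (2 * v t ^ 1 * (-(2 / 3) * (1 - 2 * u t ^ 3) / (u t ^ 4 * v t ^ 2))))
          * (2 - u t ^ 3)
          + u t * v t ^ 2 * (0 - 3 * u t ^ 2 * ((2 / 3) * (2 - u t ^ 3) / (u t ^ 3 * v t ^ 3)))) t := by
      exact ((hu' t ht).mul ((hv' t ht).pow 2)).mul ((hasDerivAt_const t 2).sub ((hu' t ht).pow 3))
    convert hd using 1
    field_simp
    ring
  -- E is constant equal to 1 on I
  have hEconst : ∀ t ∈ I, E t = 1 := by
    intro t ht
    have hcvx : Convex ℝ I := hIconn.convex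
    have hbd := hcvx.norm_image_sub_le_of_norm_hasDerivWithin_le
      (f := E) (f' := fun _ => (0:ℝ)) (C := 0)
      (fun x hx => (hE' x hx).hasDerivWithinAt) (fun x _ => by simp) h0I ht
    have hE0 : E 0 = 1 := by simp [hE, hu0, hv0]; norm_num
    have : ‖E t - E 0‖ ≤ 0 := by simpa using hbd
    have := norm_le_zero_iff.mp this
    rw [sub_eq_zero] at this
    rw [this, hE0]
  -- conclude
  intro t ht
  have hkey := key_alg (u t) (2 - u t ^ 3) (v t) (hu_pos t ht) (hb t ht) (hv_pos t ht)
    (hEconst t ht)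
  have := hu' t ht
  rwa [hkey] at this
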